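/- Marginal coverage of split conformal prediction (lower bound): let W_1, …, W_{N+1} be exchangeable random elements of a measurable space 𝒲 (representing the calibration triples (X_i, Y_i, Ŷ_i) and the test triple), let s : 𝒲 → ℝ be a measurable nonconformity score function, and set s_i := s(W_i). Then for every α ∈ [0,1], P( s(W_{N+1}) ≤ Q_{1−α}(s_1, …, s_N, +∞) ) ≥ 1 − α; equivalently, the conformal prediction set Ĉ_α built from the calibration scores covers the test response with probability at least 1 − α. -/

import Mathlib

/-!
Let `S i = s (W i)`. Unwinding the quantile, the test point is covered exactly when fewer than
`k = ⌈(1 - α)(N + 1)⌉` scores lie strictly below `S (N + 1)`. For any `k` of the `N + 1` indices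
this rank event holds for at least `k` of them (take the smallest score among the indices where it
fails: everything below it is an index where it holds). By exchangeability all `N + 1` rank events
have the same probability, so each has probability at least `k / (N + 1) ≥ 1 - α`.
-/

open MeasureTheory

/-- Exchangeability: for every permutation `π`, the joint law of the permuted family
equals the joint law of the original family. -/
def Exchangeable {Ω : Type*} [MeasurableSpace Ω] (P : Measure Ω)
    {m : ℕ} {α : Type*} [MeasurableSpace α] (Z : Fin m → Ω → α) : Prop :=
  ∀ π : Equiv.Perm (Fin m),
    Measure.map (fun ω => fun i => Z (π i) ω) P = Measure.map (fun ω => fun i => Z i ω) P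

/-- Empirical `β`-quantile of extended-real values `z 1, …, z m`:
`inf { x ∈ ℝ : (1/m) · #{ i : z i ≤ x } ≥ β }`, with `inf ∅ = +∞` (in `EReal`). -/
noncomputable def empQuantile {m : ℕ} (z : Fin m → EReal) (β : ℝ) : EReal :=
  sInf ((fun r : ℝ => (r : EReal)) ''
    {r : ℝ | β ≤ ((Finset.univ.filter (fun i => z i ≤ (r : EReal))).card : ℝ) / m})

/-- The empirical `β`-quantile of the `n + 1` values `z 1, …, z n, +∞`. -/
noncomputable def augQuantile {n : ℕ} (z : Fin n → ℝ) (β : ℝ) : EReal :=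
  empQuantile (Fin.snoc (fun i => ((z i : ℝ) : EReal)) ⊤) β

open Finset
open scoped ENNReal

theorem coe_le_empQuantile_iff {m : ℕ} (z : Fin m → EReal) (β t : ℝ) :
    (t : EReal) ≤ empQuantile z β ↔ (#{i | z i < t} : ℝ) / m < β := by
  rw [empQuantile, le_sInf_iff]
  constructor
  · intro h
    by_contra! hβ
    obtain ⟨r, hr_sup, hrt⟩ := EReal.lt_iff_exists_real_btwn.1 <|
      (Finset.sup_lt_iff (EReal.bot_lt_coe t)).2 fun i (hi : i ∈ ({i | z i < t} : Finset _)) =>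
        (mem_filter.1 hi).2
    have hcard : #{i | z i < t} ≤ #{i | z i ≤ r} :=
      card_le_card <| monotone_filter_right _ fun i _ hi =>
        (le_sup (mem_filter.2 ⟨mem_univ i, hi⟩)).trans hr_sup.le
    exact (h _ ⟨r, hβ.trans (by gcongr), rfl⟩).not_gt hrt
  · rintro hβ _ ⟨r, hr, rfl⟩
    by_contra! hrt
    have hcard : #{i | z i ≤ r} ≤ #{i | z i < t} :=
      card_le_card <| monotone_filter_right _ fun i _ hi => hi.trans_lt hrt
    exact (hr.trans (by gcongr)).not_gt hβ

theorem coe_le_augQuantile_iff {n : ℕ} (z : Fin n → ℝ) (β t : ℝ) :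
    (t : EReal) ≤ augQuantile z β ↔ (#{i | z i < t} : ℝ) / (n + 1) < β := by
  have hcard : #{i | (Fin.snoc (fun i => (z i : EReal)) ⊤ : Fin (n + 1) → EReal) i < t} =
      #{i | z i < t} := by
    simp only [card_filter, Fin.sum_univ_castSucc, Fin.snoc_castSucc, Fin.snoc_last,
      EReal.coe_lt_coe_iff]
    simp
  rw [augQuantile, coe_le_empQuantile_iff, hcard]
  push_cast
  rfl

theorem card_filter_castSucc_lt_last {n : ℕ} (v : Fin (n + 1) → ℝ) :
    #{i : Fin n | v i.castSucc < v (Fin.last n)} = #{i | v i < v (Fin.last n)} := by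
  simp only [card_filter, Fin.sum_univ_castSucc, lt_irrefl, if_false, add_zero]

theorem card_filter_comp_perm {ι : Type*} [Fintype ι] (σ : Equiv.Perm ι) (p : ι → Prop)
    [DecidablePred p] : #{i | p (σ i)} = #{i | p i} := by
  simp only [card_filter]
  exact Equiv.sum_comp σ fun i => if p i then 1 else 0

theorem le_card_filter_card_lt {ι α : Type*} [Fintype ι] [LinearOrder α] (v : ι → α) {k : ℕ}
    (hk : k ≤ Fintype.card ι) : k ≤ #{j | #{i | v i < v j} < k} := by
  by_cases hall : ∀ j, #{i | v i < v j} < k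
  · simpa [filter_true_of_mem fun j _ => hall j] using hk
  push Not at hall
  obtain ⟨j₀, hj₀, hmin⟩ := exists_min_image {j | k ≤ #{i | v i < v j}} v
    (by simpa [Finset.Nonempty] using hall)
  refine (mem_filter.1 hj₀).2.trans (card_le_card <| monotone_filter_right _ fun i _ hi => ?_)
  by_contra! hi'
  exact (hmin i (mem_filter.2 ⟨mem_univ i, hi'⟩)).not_gt hi

theorem measurable_card_filter_lt {m : ℕ} (j : Fin m) :
    Measurable fun v : Fin m → ℝ => #{i | v i < v j} := by
  simp only [card_filter]
  exact Finset.measurable_sum _ fun i _ =>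
    Measurable.ite (measurableSet_lt (measurable_pi_apply i) (measurable_pi_apply j))
      measurable_const measurable_const

section RankEvents

variable {Ω : Type*} [MeasurableSpace Ω] {P : Measure Ω} {m : ℕ}

theorem natCast_le_sum_measure_rank_lt [IsProbabilityMeasure P] {Z : Fin m → Ω → ℝ}
    (hZm : ∀ i, Measurable (Z i)) {k : ℕ} (hk : k ≤ m) :
    (k : ℝ≥0∞) ≤ ∑ j, P {ω | #{i | Z i ω < Z j ω} < k} := by
  set E : Fin m → Set Ω := fun j => {ω | #{i | Z i ω < Z j ω} < k}
  have hE : ∀ j, MeasurableSet (E j) := fun j =>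
    (measurable_card_filter_lt j).comp (measurable_pi_lambda _ hZm) measurableSet_Iio
  have hcount : ∀ ω, (k : ℝ≥0∞) ≤ ∑ j, (E j).indicator 1 ω := fun ω => by
    simpa [Set.indicator_apply, E] using le_card_filter_card_lt (fun i => Z i ω) (by simpa using hk)
  calc (k : ℝ≥0∞) = ∫⁻ _, (k : ℝ≥0∞) ∂P := by simp
    _ ≤ ∫⁻ ω, ∑ j, (E j).indicator 1 ω ∂P := lintegral_mono hcount
    _ = ∑ j, P (E j) := by
        rw [lintegral_finsetSum _ fun j _ => measurable_one.indicator (hE j)]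
        simp only [lintegral_indicator_one (hE _)]

namespace Exchangeable

theorem comp {α β : Type*} [MeasurableSpace α] [MeasurableSpace β] {Z : Fin m → Ω → α}
    (hZ : Exchangeable P Z) (hZm : ∀ i, Measurable (Z i)) {f : α → β} (hf : Measurable f) :
    Exchangeable P fun i ω => f (Z i ω) := by
  intro σ
  have hF : Measurable fun v : Fin m → α => fun i => f (v i) := by fun_prop
  have h := congrArg (Measure.map fun v i => f (v i)) (hZ σ)
  rwa [Measure.map_map hF (by fun_prop), Measure.map_map hF (by fun_prop)] at h

theorem measure_preimage_comp_perm {α : Type*} [MeasurableSpace α] {Z : Fin m → Ω → α}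
    (hZ : Exchangeable P Z) (hZm : ∀ i, Measurable (Z i)) (σ : Equiv.Perm (Fin m))
    {B : Set (Fin m → α)} (hB : MeasurableSet B) :
    P ((fun ω i => Z (σ i) ω) ⁻¹' B) = P ((fun ω i => Z i ω) ⁻¹' B) := by
  rw [← Measure.map_apply (by fun_prop) hB, hZ σ, Measure.map_apply (by fun_prop) hB]

variable {Z : Fin m → Ω → ℝ}

theorem measure_rank_lt_eq (hZ : Exchangeable P Z) (hZm : ∀ i, Measurable (Z i)) (k : ℕ)
    (j j' : Fin m) :
    P {ω | #{i | Z i ω < Z j ω} < k} = P {ω | #{i | Z i ω < Z j' ω} < k} := by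
  have hB : MeasurableSet {v : Fin m → ℝ | #{i | v i < v j'} < k} :=
    measurable_card_filter_lt j' measurableSet_Iio
  refine Eq.trans ?_ (hZ.measure_preimage_comp_perm hZm (Equiv.swap j j') hB)
  congr 1 with ω
  simp only [Set.mem_preimage, Set.mem_ofPred_eq, Equiv.swap_apply_right,
    card_filter_comp_perm (Equiv.swap j j') fun i => Z i ω < Z j ω]

theorem natCast_le_mul_measure_rank_lt [IsProbabilityMeasure P] (hZ : Exchangeable P Z)
    (hZm : ∀ i, Measurable (Z i)) {k : ℕ} (hk : k ≤ m) (j : Fin m) :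
    (k : ℝ≥0∞) ≤ m * P {ω | #{i | Z i ω < Z j ω} < k} :=
  calc (k : ℝ≥0∞) ≤ ∑ j', P {ω | #{i | Z i ω < Z j' ω} < k} :=
        natCast_le_sum_measure_rank_lt hZm hk
    _ = ∑ _j' : Fin m, P {ω | #{i | Z i ω < Z j ω} < k} :=
        sum_congr rfl fun j' _ => hZ.measure_rank_lt_eq hZm k j' j
    _ = m * P {ω | #{i | Z i ω < Z j ω} < k} := by simp

end Exchangeable

end RankEvents

theorem stmt2_general {Ω : Type*} [MeasurableSpace Ω] (P : Measure Ω) [IsProbabilityMeasure P]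
    {𝒲 : Type*} [MeasurableSpace 𝒲]
    (N : ℕ) (W : Fin (N + 1) → Ω → 𝒲) (hmeas : ∀ i, Measurable (W i))
    (hexch : Exchangeable P W)
    (s : 𝒲 → ℝ) (hs : Measurable s)
    (α : ℝ) (hα0 : 0 ≤ α) :
    ENNReal.ofReal (1 - α) ≤
      P {ω | W (Fin.last N) ω ∈
          {w : 𝒲 | (s w : EReal) ≤
            augQuantile (fun i : Fin N => s (W (Fin.castSucc i) ω)) (1 - α)}} := by
  set k := ⌈(1 - α) * (N + 1)⌉₊
  have hk : k ≤ N + 1 := Nat.ceil_le.2 (by push_cast; nlinarith)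
  have hcover : {ω | W (Fin.last N) ω ∈ {w : 𝒲 | (s w : EReal) ≤
        augQuantile (fun i : Fin N => s (W (Fin.castSucc i) ω)) (1 - α)}} =
      {ω | #{i | s (W i ω) < s (W (Fin.last N) ω)} < k} := by
    ext ω
    simp only [Set.mem_ofPred_eq, coe_le_augQuantile_iff,
      div_lt_iff₀ (by positivity : (0 : ℝ) < N + 1), card_filter_castSucc_lt_last fun i => s (W i ω)]
    exact Nat.lt_ceil.symm
  have hmain := (hexch.comp hmeas hs).natCast_le_mul_measure_rank_lt
    (fun i => hs.comp (hmeas i)) hk (Fin.last N)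
  rw [hcover]
  calc ENNReal.ofReal (1 - α) ≤ ENNReal.ofReal (k / (N + 1)) :=
        ENNReal.ofReal_le_ofReal <| (le_div_iff₀ (by positivity)).2 (Nat.le_ceil _)
    _ = k / (N + 1) := by
        rw [ENNReal.ofReal_div_of_pos (by positivity)]
        norm_cast
    _ ≤ _ := (ENNReal.div_le_iff (by simp) (by simp)).2 (by simpa [mul_comm] using hmain)

/-- Marginal coverage of split conformal prediction (lower bound): the test score is
at most the augmented `(1 - α)`-quantile of the calibration scores with probability
at least `1 - α`; equivalently, the conformal set
`Ĉ_α = { w : s w ≤ Q_{1-α}(s_1, …, s_N, +∞) }` covers the test point `W (N+1)`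
with probability at least `1 - α`. -/
theorem stmt2 {Ω : Type*} [MeasurableSpace Ω] (P : Measure Ω) [IsProbabilityMeasure P]
    {𝒲 : Type*} [MeasurableSpace 𝒲]
    (N : ℕ) (W : Fin (N + 1) → Ω → 𝒲) (hmeas : ∀ i, Measurable (W i))
    (hexch : Exchangeable P W)
    (s : 𝒲 → ℝ) (hs : Measurable s)
    (α : ℝ) (hα0 : 0 ≤ α) (hα1 : α ≤ 1) :
    ENNReal.ofReal (1 - α) ≤
      P {ω | W (Fin.last N) ω ∈
          {w : 𝒲 | (s w : EReal) ≤
            augQuantile (fun i : Fin N => s (W (Fin.castSucc i) ω)) (1 - α)}} :=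
  stmt2_general P N W hmeas hexch s hs α hα0
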